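/- arXiv:1004.1432 — 5 statements merged into one kernel-verified Lean document; each statement's English description precedes it below -/
import Mathlib

section
/- Let d ≥ 1, R > 0, γ > 1, and let D = {q ∈ ℝ^d : |q| < R}. Suppose M : ℝ^d → ℝ and w : ℝ^d → ℝ are measurable functions and c₁, c₂, c₃, c₄ > 0 are constants such that for all q ∈ D: c₁ · (R − |q|)^γ ≤ M(q) ≤ c₂ · (R − |q|)^γ and c₃ ≤ (R − |q|) · w(q) ≤ c₄. Then for every real constant C₀, the function q ↦ (1 + (C₀ + log M(q))² + w(q)²) · M(q) is Lebesgue-integrable over D. (This is the integrability statement ∫_D [1 + U(|q|²/2)² + U′(|q|²/2)²] M(q) dq < ∞ for a Maxwellian M = Z⁻¹ e^{−U(|q|²/2)} satisfying the growth conditions with exponent γ > 1, where U(|q|²/2) = −log M(q) − log Z and w(q) = U′(|q|²/2).) -/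
/-!
Write `t = R - ‖q‖`. The map `x ↦ (1 + (C₀ + log x)²) x` extends continuously to `x = 0`, so it
is bounded on `[0, c₂ R^γ] ∋ M q`; and since `t w` is bounded, `w² M ≲ t^(γ - 2)`. In polar
coordinates `(R - ‖q‖)^s` is integrable on the ball as soon as `(R - r)^s` is integrable on
`(0, R)`, i.e. for `s > -1`; here `s = γ - 2 > -1`.
-/

open MeasureTheory Set Metric Real

lemma Real.continuousOn_mul_log_sq : ContinuousOn (fun x : ℝ => x * log x ^ 2) (Ici 0) := by
  have h : Continuous fun x : ℝ => 4 * (√x * log √x) ^ 2 :=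
    continuous_const.mul ((continuous_mul_log.comp continuous_sqrt).pow 2)
  refine h.continuousOn.congr fun x (hx : 0 ≤ x) => ?_
  dsimp only
  rw [log_sqrt hx]
  nth_rewrite 1 [← sq_sqrt hx]
  ring

lemma Real.bddAbove_one_add_add_log_sq_mul_image_Icc (C m : ℝ) :
    BddAbove ((fun x => (1 + (C + log x) ^ 2) * x) '' Icc 0 m) := by
  have h : ContinuousOn (fun x => (1 + C ^ 2) * x + 2 * C * (x * log x) + x * log x ^ 2) (Ici 0) :=
    ((continuous_const.mul continuous_id).add
      (continuous_const.mul continuous_mul_log)).continuousOn.add continuousOn_mul_log_sq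
  refine isCompact_Icc.bddAbove_image ((h.congr fun x _ => ?_).mono Icc_subset_Ici_self)
  ring

lemma integrableOn_Ioo_rpow_sub {R s : ℝ} (hs : -1 < s) :
    IntegrableOn (fun y : ℝ => (R - y) ^ s) (Ioo 0 R) := by
  have h := (intervalIntegral.intervalIntegrable_rpow' (a := 0) (b := R) hs).comp_sub_left R
  simp only [sub_zero, sub_self] at h
  exact h.symm.def'.mono_set (Ioo_subset_Ioc_self.trans Ioc_subset_uIoc)

lemma integrableOn_ball_rpow_sub_norm {E : Type*} [NormedAddCommGroup E] [NormedSpace ℝ E]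
    [Nontrivial E] [FiniteDimensional ℝ E] [MeasurableSpace E] [BorelSpace E]
    (μ : Measure E) [μ.IsAddHaarMeasure] {R s : ℝ} (hs : -1 < s) :
    IntegrableOn (fun x : E => (R - ‖x‖) ^ s) (ball 0 R) μ := by
  refine (integrableOn_fun_norm_addHaar μ (f := fun y => (R - y) ^ s)).mpr ?_
  simpa only [smul_eq_mul] using (integrableOn_Ioo_rpow_sub hs).continuousOn_mul_of_subset
    (continuous_pow _).continuousOn isCompact_Icc measurableSet_Ioo Ioo_subset_Icc_self

lemma sq_mul_le_of_mul_mem_Icc {t γ a b c M w : ℝ} (ht : 0 < t) (hM₀ : 0 ≤ M)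
    (hM : M ≤ c * t ^ γ) (hw : t * w ∈ Icc a b) :
    w ^ 2 * M ≤ max |a| |b| ^ 2 * c * t ^ (γ - 2) := by
  have htw : (t * w) ^ 2 ≤ max |a| |b| ^ 2 :=
    sq_le_sq.mpr ((abs_le_max_abs_abs hw.1 hw.2).trans (le_abs_self _))
  calc w ^ 2 * M = (t * w) ^ 2 * M / t ^ 2 := by field_simp
    _ ≤ max |a| |b| ^ 2 * (c * t ^ γ) / t ^ 2 := by gcongr
    _ = max |a| |b| ^ 2 * c * t ^ (γ - 2) := by
      rw [show γ - 2 = γ - (2 : ℕ) by norm_num, rpow_sub_natCast ht.ne']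
      ring

theorem stmt2_general (d : ℕ) (hd : 1 ≤ d) (R γ : ℝ) (hγ : 1 < γ)
    (M w : EuclideanSpace ℝ (Fin d) → ℝ) (hM : Measurable M) (hw : Measurable w)
    (c₁ c₂ c₃ c₄ : ℝ) (hc₁ : 0 < c₁) (hc₂ : 0 < c₂)
    (hgrowth : ∀ q ∈ Metric.ball (0 : EuclideanSpace ℝ (Fin d)) R,
      c₁ * (R - ‖q‖) ^ γ ≤ M q ∧ M q ≤ c₂ * (R - ‖q‖) ^ γ ∧
      c₃ ≤ (R - ‖q‖) * w q ∧ (R - ‖q‖) * w q ≤ c₄)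
    (C₀ : ℝ) :
    IntegrableOn
      (fun q => (1 + (C₀ + Real.log (M q)) ^ 2 + w q ^ 2) * M q)
      (Metric.ball (0 : EuclideanSpace ℝ (Fin d)) R) volume := by
  have : Nonempty (Fin d) := ⟨⟨0, hd⟩⟩
  obtain ⟨K, hK⟩ := bddAbove_one_add_add_log_sq_mul_image_Icc C₀ (c₂ * R ^ γ)
  set L := max |c₃| |c₄|
  have hdom : IntegrableOn (fun q => K + L ^ 2 * c₂ * (R - ‖q‖) ^ (γ - 2)) (ball (0 : EuclideanSpace ℝ (Fin d)) R) volume :=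
    (integrableOn_const measure_ball_lt_top.ne).add
      ((integrableOn_ball_rpow_sub_norm volume (by linarith)).const_mul _)
  refine hdom.mono' (by fun_prop) (ae_restrict_of_forall_mem measurableSet_ball fun q hq => ?_)
  obtain ⟨hM₁, hM₂, hw₁, hw₂⟩ := hgrowth q hq
  have ht : 0 < R - ‖q‖ := sub_pos.mpr (mem_ball_zero_iff.mp hq)
  have hM₀ : 0 ≤ M q := (mul_nonneg hc₁.le (rpow_nonneg ht.le γ)).trans hM₁
  have hMR : M q ≤ c₂ * R ^ γ := hM₂.trans (by gcongr; linarith [norm_nonneg q])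
  have hlog := hK (mem_image_of_mem _ ⟨hM₀, hMR⟩)
  have hwM := sq_mul_le_of_mul_mem_Icc ht hM₀ hM₂ ⟨hw₁, hw₂⟩
  rw [Real.norm_of_nonneg (by positivity), add_mul]
  exact add_le_add hlog hwM

theorem stmt2 (d : ℕ) (hd : 1 ≤ d) (R γ : ℝ) (hR : 0 < R) (hγ : 1 < γ)
    (M w : EuclideanSpace ℝ (Fin d) → ℝ) (hM : Measurable M) (hw : Measurable w)
    (c₁ c₂ c₃ c₄ : ℝ) (hc₁ : 0 < c₁) (hc₂ : 0 < c₂) (hc₃ : 0 < c₃) (hc₄ : 0 < c₄)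
    (hgrowth : ∀ q ∈ Metric.ball (0 : EuclideanSpace ℝ (Fin d)) R,
      c₁ * (R - ‖q‖) ^ γ ≤ M q ∧ M q ≤ c₂ * (R - ‖q‖) ^ γ ∧
      c₃ ≤ (R - ‖q‖) * w q ∧ (R - ‖q‖) * w q ≤ c₄)
    (C₀ : ℝ) :
    IntegrableOn
      (fun q => (1 + (C₀ + Real.log (M q)) ^ 2 + w q ^ 2) * M q)
      (Metric.ball (0 : EuclideanSpace ℝ (Fin d)) R) volume :=
  stmt2_general d hd R γ hγ M w hM hw c₁ c₂ c₃ c₄ hc₁ hc₂ hgrowth C₀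
end

section
/- Let d ≥ 1, K ≥ 1, let b₁, …, b_K > 0, and let D = {q = (q₁, …, q_K) : qᵢ ∈ ℝ^d, |qᵢ| < √bᵢ for each i} ⊆ (ℝ^d)^K. Let M : (ℝ^d)^K → ℝ be continuously differentiable with support contained in the closure of D, let φ : (ℝ^d)^K → ℝ be continuously differentiable, and for each i = 1, …, K let uᵢ : ℝ → ℝ be a function such that for every q ∈ D the gradient of M with respect to the i-th block variable satisfies ∇_{qᵢ} M(q) = − uᵢ(|qᵢ|²/2) · M(q) · qᵢ. Let B : ℝ^d → ℝ^d be a linear map with trace B = 0. Then ∫_D M(q) · Σ_{i=1}^K ⟨B qᵢ, ∇_{qᵢ} φ(q)⟩ dq = ∫_D M(q) · φ(q) · Σ_{i=1}^K uᵢ(|qᵢ|²/2) · ⟨qᵢ, B qᵢ⟩ dq, where the integrals are with respect to Lebesgue measure on (ℝ^d)^K. (This is the integration-by-parts formula of Lemma 3.1 in the smooth case: ∫_D M Σᵢ (Bqᵢ)·∇_{qᵢ}φ̂ dq = ∫_D M φ̂ Σᵢ qᵢ qᵢᵀ Uᵢ′(|qᵢ|²/2) : B dq for trace-free B.) -/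
/-!
The linear vector field `q ↦ (B qᵢ)ᵢ` has trace `K · tr B = 0`, so it is divergence free and
`∫ D(Mφ)(q) (B qᵢ)ᵢ dq = 0` for the compactly supported `Mφ`. The product rule splits this into
the left-hand side and `-∫ φ · DM(q) (B qᵢ)ᵢ`, which the hypothesis on `∇_{qᵢ} M` turns into the
right-hand side on `D`. Both integrands vanish off `closure D`, and the frontier of the convex set
`D` is Lebesgue-null, so integrating over `D` or over the whole space makes no difference.
-/

open MeasureTheory RealInnerProductSpace

theorem LinearMap.trace_piMap {R ι : Type*} [CommRing R] [Fintype ι] [DecidableEq ι]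
    {M : ι → Type*} [∀ i, AddCommGroup (M i)] [∀ i, Module R (M i)]
    [∀ i, Module.Free R (M i)] [∀ i, Module.Finite R (M i)] (f : ∀ i, M i →ₗ[R] M i) :
    LinearMap.trace R (∀ i, M i) (LinearMap.piMap f) = ∑ i, LinearMap.trace R (M i) (f i) := by
  have hsum : LinearMap.piMap f = ∑ i, LinearMap.single R M i ∘ₗ (f i ∘ₗ LinearMap.proj i) := by
    ext x j
    simp
  rw [hsum, map_sum]
  refine Finset.sum_congr rfl fun i _ => ?_
  rw [LinearMap.trace_comp_comm', LinearMap.comp_assoc, LinearMap.proj_comp_single_same,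
    LinearMap.comp_id]

theorem LinearMap.trace_eq_sum_repr_apply {R M ι : Type*} [CommRing R] [AddCommGroup M]
    [Module R M] [Fintype ι] [DecidableEq ι] (b : Module.Basis ι R M) (A : M →ₗ[R] M) :
    LinearMap.trace R M A = ∑ j, b.repr (A (b j)) j := by
  simp [LinearMap.trace_eq_matrix_trace R b, Matrix.trace, LinearMap.toMatrix_apply]

section
variable {E : Type*} [NormedAddCommGroup E] [NormedSpace ℝ E] [MeasurableSpace E]
  [FiniteDimensional ℝ E] [BorelSpace E] (μ : Measure E) [μ.IsAddHaarMeasure] {F : E → ℝ}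

theorem integral_fderiv_apply_mul_eq_neg (hF : ContDiff ℝ 1 F) (hFc : HasCompactSupport F) (ℓ : E →L[ℝ] ℝ) (v : E) :
    ∫ x, fderiv ℝ F x v * ℓ x ∂μ = -ℓ v * ∫ x, F x ∂μ := by
  obtain ⟨C, hC⟩ := hF.lipschitzWith_of_hasCompactSupport hFc one_ne_zero
  have key := ℓ.lipschitz.integral_lineDeriv_mul_eq (μ := μ) hC hFc (-v)
  simp only [ℓ.differentiableAt.lineDeriv_eq_fderiv, ContinuousLinearMap.fderiv, neg_neg,
    (hF.differentiable one_ne_zero _).lineDeriv_eq_fderiv, map_neg] at key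
  rw [← key, integral_const_mul]

theorem integral_fderiv_apply_self_eq_neg_trace_mul (hF : ContDiff ℝ 1 F)
    (hFc : HasCompactSupport F) (A : E →L[ℝ] E) :
    ∫ x, fderiv ℝ F x (A x) ∂μ = -LinearMap.trace ℝ E A * ∫ x, F x ∂μ := by
  classical
  let b := Module.finBasis ℝ E
  let ℓ j : E →L[ℝ] ℝ := (b.coord j).toContinuousLinearMap.comp A
  have hexpand : ∀ x, fderiv ℝ F x (A x) = ∑ j, fderiv ℝ F x (b j) * ℓ j x := by
    intro x
    conv_lhs => rw [← b.sum_repr (A x)]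
    simp only [map_sum, map_smul, smul_eq_mul, mul_comm]
    rfl
  have hint : ∀ j, Integrable (fun x => fderiv ℝ F x (b j) * ℓ j x) μ := fun j =>
    (((hF.continuous_fderiv one_ne_zero).clm_apply continuous_const).mul (ℓ j).continuous
      ).integrable_of_hasCompactSupport (hFc.fderiv_apply (𝕜 := ℝ) _).mul_right
  simp_rw [hexpand, integral_finsetSum _ fun j _ => hint j,
    integral_fderiv_apply_mul_eq_neg μ hF hFc]
  rw [← Finset.sum_mul, Finset.sum_neg_distrib, LinearMap.trace_eq_sum_repr_apply b]
  rfl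

theorem integral_mul_fderiv_apply_self_eq_neg_of_trace_eq_zero {M φ : E → ℝ}
    (hM : ContDiff ℝ 1 M) (hMc : HasCompactSupport M) (hφ : ContDiff ℝ 1 φ) {A : E →L[ℝ] E}
    (hA : LinearMap.trace ℝ E A = 0) :
    ∫ x, M x * fderiv ℝ φ x (A x) ∂μ = -∫ x, φ x * fderiv ℝ M x (A x) ∂μ := by
  have hprod : ∀ x, fderiv ℝ (fun y => M y * φ y) x (A x)
      = M x * fderiv ℝ φ x (A x) + φ x * fderiv ℝ M x (A x) := fun x => by
    rw [fderiv_fun_mul (hM.differentiable one_ne_zero x) (hφ.differentiable one_ne_zero x)]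
    rfl
  have hDMc : HasCompactSupport fun x => fderiv ℝ M x (A x) :=
    hMc.mono' fun x hx => tsupport_fderiv_subset ℝ <| subset_tsupport _ fun h => hx (by simp [h])
  have hint₁ : Integrable (fun x => M x * fderiv ℝ φ x (A x)) μ :=
    (hM.continuous.mul ((hφ.continuous_fderiv one_ne_zero).clm_apply A.continuous)
      ).integrable_of_hasCompactSupport hMc.mul_right
  have hint₂ : Integrable (fun x => φ x * fderiv ℝ M x (A x)) μ :=
    (hφ.continuous.mul ((hM.continuous_fderiv one_ne_zero).clm_apply A.continuous)
      ).integrable_of_hasCompactSupport hDMc.mul_left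
  have hdiv := integral_fderiv_apply_self_eq_neg_trace_mul μ (hM.mul hφ) hMc.mul_right A
  rw [hA, neg_zero, zero_mul] at hdiv
  simp_rw [hprod] at hdiv
  rw [integral_add hint₁ hint₂] at hdiv
  linarith
end

section
variable {ι E : Type*} [Fintype ι] [DecidableEq ι] [NormedAddCommGroup E] [InnerProductSpace ℝ E]
  [CompleteSpace E] {g : (ι → E) → ℝ} {q : ι → E}

theorem inner_gradient_update_eq_fderiv_single (hg : DifferentiableAt ℝ g q) (i : ι) (v : E) :
    ⟪gradient (fun y => g (Function.update q i y)) (q i), v⟫ = fderiv ℝ g q (Pi.single i v) := by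
  have h : HasFDerivAt (fun y => g (Function.update q i y))
      ((fderiv ℝ g q).comp (.pi (Pi.single i (.id ℝ E)))) (q i) := by
    refine HasFDerivAt.comp (q i) ?_ (hasFDerivAt_update q (q i))
    rw [Function.update_eq_self]
    exact hg.hasFDerivAt
  rw [h.hasGradientAt.gradient, InnerProductSpace.toDual_symm_apply,
    ContinuousLinearMap.comp_apply]
  congr 1
  ext j : 1
  rcases eq_or_ne j i with rfl | hj <;> simp [*]

theorem fderiv_apply_piMap_eq_sum_inner_gradient (hg : DifferentiableAt ℝ g q) (B : E →L[ℝ] E) :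
    fderiv ℝ g q (ContinuousLinearMap.piMap (fun _ => B) q)
      = ∑ i, ⟪gradient (fun y => g (Function.update q i y)) (q i), B (q i)⟫ := by
  simp_rw [inner_gradient_update_eq_fderiv_single hg, ← map_sum, Finset.univ_sum_single]
  rfl
end

theorem setIntegral_eq_integral_of_forall_notMem_closure {X F : Type*} [TopologicalSpace X]
    [MeasurableSpace X] [NormedAddCommGroup F] [NormedSpace ℝ F] {μ : Measure X} {s : Set X}
    {f : X → F} (hs : μ (frontier s) = 0) (hf : ∀ x ∉ closure s, f x = 0) :
    ∫ x in s, f x ∂μ = ∫ x, f x ∂μ := by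
  refine setIntegral_eq_integral_of_ae_compl_eq_zero ?_
  filter_upwards [measure_eq_zero_iff_ae_notMem.1 hs] with x hx hxs
  exact hf x (by simp [closure_eq_self_union_frontier, hxs, hx])

theorem stmt4_general (d K : ℕ) (bv : Fin K → ℝ)
    (D : Set (Fin K → EuclideanSpace ℝ (Fin d)))
    (hD : D = Set.univ.pi fun i => Metric.ball 0 (Real.sqrt (bv i)))
    (M φ : (Fin K → EuclideanSpace ℝ (Fin d)) → ℝ)
    (hM : ContDiff ℝ 1 M) (hφ : ContDiff ℝ 1 φ)
    (hsupp : tsupport M ⊆ closure D)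
    (u : Fin K → ℝ → ℝ)
    (hu : ∀ q ∈ D, ∀ i : Fin K,
      gradient (fun y => M (Function.update q i y)) (q i)
        = (-(u i (‖q i‖ ^ 2 / 2) * M q)) • q i)
    (B : EuclideanSpace ℝ (Fin d) →ₗ[ℝ] EuclideanSpace ℝ (Fin d))
    (hB : LinearMap.trace ℝ (EuclideanSpace ℝ (Fin d)) B = 0) :
    ∫ q in D, M q * ∑ i : Fin K,
        ⟪B (q i), gradient (fun y => φ (Function.update q i y)) (q i)⟫
      = ∫ q in D, M q * φ q * ∑ i : Fin K,
          u i (‖q i‖ ^ 2 / 2) * ⟪q i, B (q i)⟫ := by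
  set A := ContinuousLinearMap.piMap fun _ : Fin K => B.toContinuousLinearMap
  have hA : LinearMap.trace ℝ _ (A : (Fin K → EuclideanSpace ℝ (Fin d)) →ₗ[ℝ] _) = 0 := by
    simp [A, LinearMap.trace_piMap, hB]
  have hDopen : IsOpen D := hD ▸ isOpen_set_pi Set.finite_univ fun _ _ => Metric.isOpen_ball
  have hDfront : volume (frontier D) = 0 :=
    (hD ▸ convex_pi fun _ _ => convex_ball _ _ : Convex ℝ D).addHaar_frontier volume
  have hMc : HasCompactSupport M :=
    (hD ▸ .pi fun _ => Metric.isBounded_ball : Bornology.IsBounded D).isCompact_closure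
      |>.of_isClosed_subset (isClosed_tsupport M) hsupp
  have hM0 : ∀ q ∉ closure D, M q = 0 := fun q hq =>
    image_eq_zero_of_notMem_tsupport fun h => hq (hsupp h)
  have hDM0 : ∀ q ∉ closure D, fderiv ℝ M q = 0 := fun q hq =>
    image_eq_zero_of_notMem_tsupport fun h => hq (hsupp (tsupport_fderiv_subset ℝ h))
  calc _ = ∫ q in D, M q * fderiv ℝ φ q (A q) := by
        congr 1 with q
        rw [fderiv_apply_piMap_eq_sum_inner_gradient (hφ.differentiable one_ne_zero _)]
        exact congrArg _ (Finset.sum_congr rfl fun i _ => real_inner_comm _ _)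
    _ = -∫ q in D, φ q * fderiv ℝ M q (A q) := by
        rw [setIntegral_eq_integral_of_forall_notMem_closure hDfront (by simp +contextual [hM0]),
          setIntegral_eq_integral_of_forall_notMem_closure hDfront (by simp +contextual [hDM0]),
          integral_mul_fderiv_apply_self_eq_neg_of_trace_eq_zero volume hM hMc hφ hA]
    _ = _ := by
        rw [← integral_neg]
        refine setIntegral_congr_fun hDopen.measurableSet fun q hq => ?_
        rw [fderiv_apply_piMap_eq_sum_inner_gradient (hM.differentiable one_ne_zero _)]
        simp_rw [hu q hq, real_inner_smul_left, LinearMap.coe_toContinuousLinearMap',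
          Finset.mul_sum, ← Finset.sum_neg_distrib]
        refine Finset.sum_congr rfl fun i _ => ?_
        ring

theorem stmt4 (d K : ℕ) (hd : 1 ≤ d) (hK : 1 ≤ K)
    (bv : Fin K → ℝ) (hbv : ∀ i, 0 < bv i)
    (D : Set (Fin K → EuclideanSpace ℝ (Fin d)))
    (hD : D = Set.univ.pi fun i => Metric.ball 0 (Real.sqrt (bv i)))
    (M φ : (Fin K → EuclideanSpace ℝ (Fin d)) → ℝ)
    (hM : ContDiff ℝ 1 M) (hφ : ContDiff ℝ 1 φ)
    (hsupp : tsupport M ⊆ closure D)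
    (u : Fin K → ℝ → ℝ)
    (hu : ∀ q ∈ D, ∀ i : Fin K,
      gradient (fun y => M (Function.update q i y)) (q i)
        = (-(u i (‖q i‖ ^ 2 / 2) * M q)) • q i)
    (B : EuclideanSpace ℝ (Fin d) →ₗ[ℝ] EuclideanSpace ℝ (Fin d))
    (hB : LinearMap.trace ℝ (EuclideanSpace ℝ (Fin d)) B = 0) :
    ∫ q in D, M q * ∑ i : Fin K,
        ⟪B (q i), gradient (fun y => φ (Function.update q i y)) (q i)⟫
      = ∫ q in D, M q * φ q * ∑ i : Fin K,
          u i (‖q i‖ ^ 2 / 2) * ⟪q i, B (q i)⟫ :=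
  stmt4_general d K bv D hD M φ hM hφ hsupp u hu B hB
end

section
/- Let 𝓕 : ℝ → ℝ be defined by 𝓕(s) = s·(log s − 1) + 1, where log denotes the natural logarithm with the convention log 0 = 0 (so 𝓕(0) = 1). Let μ be a finite measure on a measurable space X, let L ≥ 1, and let φ : X → ℝ be measurable with φ ≥ 0 almost everywhere and with 𝓕 ∘ φ μ-integrable. Then the function x ↦ 𝓕(max(φ(x) − L, 0)) is μ-integrable and ∫_X 𝓕(max(φ − L, 0)) dμ ≤ μ(X) + ∫_X 𝓕(φ) dμ. -/
/-!
The function `𝓕` is Mathlib's `klFun`, which is convex and nonnegative on `[0, ∞)` with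
`klFun 0 = 1`. For `t ≥ 0` the point `max (t - L) 0` lies in `[0, t]`, so by convexity
`𝓕 (max (t - L) 0) ≤ max (𝓕 0) (𝓕 t) ≤ 1 + 𝓕 t`. Integrating this pointwise bound gives
both the integrability and the estimate.
-/

open MeasureTheory InformationTheory Set

lemma klFun_le_one_add_klFun_of_mem_Icc {a t : ℝ} (ha : a ∈ Icc 0 t) :
    klFun a ≤ 1 + klFun t := by
  have ht : 0 ≤ t := ha.1.trans ha.2
  calc klFun a ≤ max (klFun 0) (klFun t) :=
        convexOn_klFun.le_max_of_mem_Icc self_mem_Ici ht ha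
    _ ≤ 1 + klFun t := by
        rw [klFun_zero]
        exact max_le (by linarith [klFun_nonneg ht]) (by linarith)

lemma klFun_max_sub_le {L t : ℝ} (hL : 0 ≤ L) (ht : 0 ≤ t) :
    klFun (max (t - L) 0) ≤ 1 + klFun t :=
  klFun_le_one_add_klFun_of_mem_Icc ⟨le_max_right _ _, max_le (by linarith) ht⟩

theorem stmt8 {X : Type*} [MeasurableSpace X] (μ : Measure X) [IsFiniteMeasure μ]
    (F : ℝ → ℝ) (hF : ∀ s, F s = s * (Real.log s - 1) + 1)
    (L : ℝ) (hL : 1 ≤ L)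
    (φ : X → ℝ) (hφm : Measurable φ) (hφ0 : ∀ᵐ x ∂μ, 0 ≤ φ x)
    (hφint : Integrable (fun x => F (φ x)) μ) :
    Integrable (fun x => F (max (φ x - L) 0)) μ ∧
    ∫ x, F (max (φ x - L) 0) ∂μ ≤ (μ Set.univ).toReal + ∫ x, F (φ x) ∂μ := by
  obtain rfl : F = klFun := funext fun s => by rw [hF, klFun_apply]; ring
  have hbound : ∀ᵐ x ∂μ, klFun (max (φ x - L) 0) ≤ 1 + klFun (φ x) := by
    filter_upwards [hφ0] with x hx using klFun_max_sub_le (by linarith) hx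
  have hmajorant : Integrable (fun x => 1 + klFun (φ x)) μ := (integrable_const 1).add hφint
  have hint : Integrable (fun x => klFun (max (φ x - L) 0)) μ := by
    refine hmajorant.mono'
      (measurable_klFun.comp ((hφm.sub_const L).max measurable_const)).aestronglyMeasurable ?_
    filter_upwards [hbound] with x hx
    rwa [Real.norm_of_nonneg (klFun_nonneg (le_max_right _ _))]
  refine ⟨hint, (integral_mono_ae hint hmajorant hbound).trans_eq ?_⟩
  rw [integral_add (integrable_const 1) hφint, integral_const, smul_eq_mul, mul_one,
    measureReal_def]
end

section
/- Let 𝓕 : ℝ → ℝ be defined by 𝓕(s) = s·(log s − 1) + 1, where log denotes the natural logarithm with the convention log 0 = 0 (so 𝓕(0) = 1). Let μ be a finite measure on a measurable space X, let L > 1, and let φ : X → ℝ be measurable with φ ≥ 0 almost everywhere, φ μ-integrable, and 𝓕 ∘ φ μ-integrable. Then ∫_X max(φ − L, 0) dμ ≤ (log L)⁻¹ · ( μ(X) + ∫_X 𝓕(φ) dμ + ∫_X φ dμ ). -/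
/-!
Pointwise, `log L * (s - L)⁺ ≤ s log s + 1 = 𝓕(s) + s` for `s ≥ 0`: below `L` this is
`s log s ≥ s - 1 ≥ -1`, and above `L` it follows from `log L ≤ log s`. Dividing by `log L > 0`
and integrating gives the estimate.
-/

open MeasureTheory Real

lemma log_mul_max_sub_le_mul_log_add_one {L s : ℝ} (hL : 0 < L) (hs : 0 ≤ s) :
    log L * max (s - L) 0 ≤ s * log s + 1 := by
  have hmul_log := self_sub_one_le_mul_log hs
  rcases le_or_gt s L with hsL | hLs
  · rw [max_eq_right (sub_nonpos.2 hsL), mul_zero]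
    linarith
  rw [max_eq_left (sub_nonneg.2 hLs.le)]
  rcases le_or_gt 1 s with hs1 | hs1
  · calc log L * (s - L) ≤ log s * (s - L) :=
          mul_le_mul_of_nonneg_right (log_le_log hL hLs.le) (by linarith)
      _ ≤ s * log s := by nlinarith [log_nonneg hs1]
      _ ≤ s * log s + 1 := by linarith
  · have hlogL : log L < 0 := log_neg hL (by linarith)
    nlinarith

theorem stmt9_general {X : Type*} [MeasurableSpace X] (μ : Measure X) [IsFiniteMeasure μ]
    (F : ℝ → ℝ) (hF : ∀ s, F s = s * (Real.log s - 1) + 1)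
    (L : ℝ) (hL : 1 < L)
    (φ : X → ℝ) (hφ0 : ∀ᵐ x ∂μ, 0 ≤ φ x)
    (hφint : Integrable φ μ)
    (hφFint : Integrable (fun x => F (φ x)) μ) :
    ∫ x, max (φ x - L) 0 ∂μ ≤
      (Real.log L)⁻¹ * ((μ Set.univ).toReal + ∫ x, F (φ x) ∂μ + ∫ x, φ x ∂μ) := by
  have hlogL : 0 < log L := log_pos hL
  have hconst_F : Integrable (fun x => 1 + F (φ x)) μ := (integrable_const 1).add hφFint
  have hpointwise : ∀ᵐ x ∂μ, max (φ x - L) 0 ≤ (log L)⁻¹ * (1 + F (φ x) + φ x) := by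
    filter_upwards [hφ0] with x hx
    rw [le_inv_mul_iff₀ hlogL, hF]
    linarith [log_mul_max_sub_le_mul_log_add_one (by linarith : 0 < L) hx]
  calc ∫ x, max (φ x - L) 0 ∂μ ≤ ∫ x, (log L)⁻¹ * (1 + F (φ x) + φ x) ∂μ :=
        integral_mono_of_nonneg (ae_of_all _ fun _ => le_max_right _ _)
          ((hconst_F.add hφint).const_mul _) hpointwise
    _ = (log L)⁻¹ * ((μ Set.univ).toReal + ∫ x, F (φ x) ∂μ + ∫ x, φ x ∂μ) := by
        rw [integral_const_mul, integral_add hconst_F hφint,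
          integral_add (integrable_const 1) hφFint]
        simp [Measure.real]

theorem stmt9 {X : Type*} [MeasurableSpace X] (μ : Measure X) [IsFiniteMeasure μ]
    (F : ℝ → ℝ) (hF : ∀ s, F s = s * (Real.log s - 1) + 1)
    (L : ℝ) (hL : 1 < L)
    (φ : X → ℝ) (hφm : Measurable φ) (hφ0 : ∀ᵐ x ∂μ, 0 ≤ φ x)
    (hφint : Integrable φ μ)
    (hφFint : Integrable (fun x => F (φ x)) μ) :
    ∫ x, max (φ x - L) 0 ∂μ ≤
      (Real.log L)⁻¹ * ((μ Set.univ).toReal + ∫ x, F (φ x) ∂μ + ∫ x, φ x ∂μ) :=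
  stmt9_general μ F hF L hL φ hφ0 hφint hφFint
end

section
/- Let d ≥ 1 and b > 0, and define f : ℝ^d → ℝ by f(q) = −(b/2)·log(1 − |q|²/b). Then for every q with |q| < √b, f is twice continuously differentiable at q, and for every ξ ∈ ℝ^d the Hessian quadratic form of f at q satisfies D²f(q)[ξ, ξ] ≥ (1 − |q|²/b)⁻¹ · |ξ|² ≥ |ξ|². (This is the Bakry–Émery condition Hess(−log M) ≥ Id for the FENE Maxwellian M(q) = Z⁻¹(1 − |q|²/b)^{b/2}, with constant κ = 1.) -/
/-!
Writing `w q = (1 - ‖q‖² / b)⁻¹`, the gradient of `f` is `w q • ⟪q, ·⟫` on the ball `‖q‖² < b`,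
so differentiating once more gives
`D²f(q)[ξ, ξ] = w q ‖ξ‖² + (2 / b) (w q)² ⟪q, ξ⟫²`.
The second term is nonnegative, and `w q ≥ 1` because `0 < 1 - ‖q‖² / b ≤ 1`.
-/

open Filter Topology InnerProductSpace

section

variable {E : Type*} [NormedAddCommGroup E] [InnerProductSpace ℝ E] {b : ℝ} {q : E}

noncomputable def fenePotential (b : ℝ) (q : E) : ℝ :=
  -(b / 2) * Real.log (1 - ‖q‖ ^ 2 / b)

omit [InnerProductSpace ℝ E] in
lemma one_sub_norm_sq_div_pos (hq : ‖q‖ ^ 2 < b) : 0 < 1 - ‖q‖ ^ 2 / b :=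
  sub_pos.mpr <| (div_lt_one <| (sq_nonneg ‖q‖).trans_lt hq).mpr hq

omit [InnerProductSpace ℝ E] in
lemma one_le_inv_one_sub_norm_sq_div (hq : ‖q‖ ^ 2 < b) : 1 ≤ (1 - ‖q‖ ^ 2 / b)⁻¹ :=
  one_le_inv₀ (one_sub_norm_sq_div_pos hq) |>.mpr <|
    sub_le_self _ <| div_nonneg (sq_nonneg _) ((sq_nonneg ‖q‖).trans_lt hq).le

lemma hasFDerivAt_one_sub_norm_sq_div (b : ℝ) (q : E) :
    HasFDerivAt (fun p : E ↦ 1 - ‖p‖ ^ 2 / b) (-(2 / b) • innerSL ℝ q) q := by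
  have h : HasDerivAt (fun u : ℝ ↦ 1 - u / b) (-b⁻¹) (‖q‖ ^ 2) := by
    simpa using ((hasDerivAt_id _).div_const b).const_sub 1
  refine (h.comp_hasFDerivAt q (hasStrictFDerivAt_norm_sq q).hasFDerivAt).congr_fderiv ?_
  ext ξ
  simp only [smul_apply, smul_eq_mul]
  ring

lemma hasFDerivAt_fenePotential (hq : ‖q‖ ^ 2 < b) :
    HasFDerivAt (fenePotential b) ((1 - ‖q‖ ^ 2 / b)⁻¹ • innerSL ℝ q) q := by
  have hb : b ≠ 0 := ((sq_nonneg ‖q‖).trans_lt hq).ne'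
  refine (((hasFDerivAt_one_sub_norm_sq_div b q).log
    (one_sub_norm_sq_div_pos hq).ne').const_mul (-(b / 2))).congr_fderiv ?_
  ext ξ
  simp only [smul_apply, smul_eq_mul]
  field_simp

lemma contDiffAt_fenePotential {n : WithTop ℕ∞} (hq : ‖q‖ ^ 2 < b) :
    ContDiffAt ℝ n (fenePotential b) q :=
  contDiffAt_const.mul <| (Real.contDiffAt_log.mpr (one_sub_norm_sq_div_pos hq).ne').comp q <|
    contDiffAt_const.sub <| (contDiff_norm_sq ℝ).contDiffAt.div_const b

lemma fderiv_fenePotential_eventuallyEq (hq : ‖q‖ ^ 2 < b) :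
    fderiv ℝ (fenePotential b) =ᶠ[𝓝 q] fun p ↦ (1 - ‖p‖ ^ 2 / b)⁻¹ • innerSL ℝ p := by
  have hball : {p : E | ‖p‖ ^ 2 < b} ∈ 𝓝 q :=
    (isOpen_lt (by fun_prop) continuous_const).mem_nhds hq
  filter_upwards [hball] with p hp using (hasFDerivAt_fenePotential hp).fderiv

lemma iteratedFDeriv_two_fenePotential (hq : ‖q‖ ^ 2 < b) (ξ : E) :
    iteratedFDeriv ℝ 2 (fenePotential b) q ![ξ, ξ] =
      (1 - ‖q‖ ^ 2 / b)⁻¹ * ‖ξ‖ ^ 2 + 2 / b * ((1 - ‖q‖ ^ 2 / b) ^ 2)⁻¹ * ⟪q, ξ⟫_ℝ ^ 2 := by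
  have hweight := (hasDerivAt_inv (one_sub_norm_sq_div_pos hq).ne').comp_hasFDerivAt q
    (hasFDerivAt_one_sub_norm_sq_div b q)
  have hgrad : HasFDerivAt (fun p : E ↦ (1 - ‖p‖ ^ 2 / b)⁻¹ • innerSL ℝ p) _ q :=
    hweight.smul (innerSL ℝ (E := E)).hasFDerivAt
  rw [iteratedFDeriv_two_apply, (fderiv_fenePotential_eventuallyEq hq).fderiv_eq, hgrad.fderiv]
  simp only [Function.comp_apply, neg_smul, smul_neg, neg_neg, Matrix.cons_val_zero, add_apply,
    smul_apply, ContinuousLinearMap.smulRight_apply, smul_eq_mul,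
    Matrix.cons_val_one, Matrix.cons_val_fin_one, innerSL_apply_apply]
  -- `innerSL ℝ ξ ξ` comes through `(innerSL ℝ).hasFDerivAt` with a linear (not semilinear)
  -- coercion, which `simp` does not match; explicit arguments make `rw` unify up to defeq.
  rw [innerSL_apply_apply _ ξ ξ, real_inner_self_eq_norm_sq]
  ring

lemma norm_sq_le_iteratedFDeriv_two_fenePotential (hq : ‖q‖ ^ 2 < b) (ξ : E) :
    (1 - ‖q‖ ^ 2 / b)⁻¹ * ‖ξ‖ ^ 2 ≤ iteratedFDeriv ℝ 2 (fenePotential b) q ![ξ, ξ] := by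
  have hb : 0 < b := (sq_nonneg ‖q‖).trans_lt hq
  rw [iteratedFDeriv_two_fenePotential hq]
  have : 0 ≤ 2 / b * ((1 - ‖q‖ ^ 2 / b) ^ 2)⁻¹ * ⟪q, ξ⟫_ℝ ^ 2 := by positivity
  linarith

end

theorem stmt10_general (d : ℕ) (b : ℝ)
    (f : EuclideanSpace ℝ (Fin d) → ℝ)
    (hf : ∀ q, f q = -(b / 2) * Real.log (1 - ‖q‖ ^ 2 / b))
    (q : EuclideanSpace ℝ (Fin d)) (hq : ‖q‖ < Real.sqrt b) :
    ContDiffAt ℝ 2 f q ∧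
    ∀ ξ : EuclideanSpace ℝ (Fin d),
      ‖ξ‖ ^ 2 ≤ (1 - ‖q‖ ^ 2 / b)⁻¹ * ‖ξ‖ ^ 2 ∧
      (1 - ‖q‖ ^ 2 / b)⁻¹ * ‖ξ‖ ^ 2 ≤ iteratedFDeriv ℝ 2 f q ![ξ, ξ] := by
  obtain rfl : f = fenePotential b := funext hf
  have hqb : ‖q‖ ^ 2 < b := (Real.lt_sqrt (norm_nonneg q)).mp hq
  refine ⟨contDiffAt_fenePotential hqb, fun ξ ↦ ⟨?_, norm_sq_le_iteratedFDeriv_two_fenePotential hqb ξ⟩⟩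
  exact le_mul_of_one_le_left (sq_nonneg _) (one_le_inv_one_sub_norm_sq_div hqb)

theorem stmt10 (d : ℕ) (hd : 1 ≤ d) (b : ℝ) (hb : 0 < b)
    (f : EuclideanSpace ℝ (Fin d) → ℝ)
    (hf : ∀ q, f q = -(b / 2) * Real.log (1 - ‖q‖ ^ 2 / b))
    (q : EuclideanSpace ℝ (Fin d)) (hq : ‖q‖ < Real.sqrt b) :
    ContDiffAt ℝ 2 f q ∧
    ∀ ξ : EuclideanSpace ℝ (Fin d),
      ‖ξ‖ ^ 2 ≤ (1 - ‖q‖ ^ 2 / b)⁻¹ * ‖ξ‖ ^ 2 ∧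
      (1 - ‖q‖ ^ 2 / b)⁻¹ * ‖ξ‖ ^ 2 ≤ iteratedFDeriv ℝ 2 f q ![ξ, ξ] :=
  stmt10_general d b f hf q hq
end
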